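/- Let ψ ≥ 1 be a real number and let p be chosen uniformly at random from the square [0,ψ]². Consider the shifted grid whose cells are the sets p + (iψ, jψ) + [0,ψ)² for integers i, j. For any two unit disks d₁ and d₂ with d₁ ∩ d₂ ≠ ∅, the probability that d₁ ∪ d₂ is contained in a single cell of the shifted grid is at least 1 − 8/ψ. -/

import Mathlib

open MeasureTheory

lemma coord_dist_le (x y : EuclideanSpace ℝ (Fin 2)) (k : Fin 2) :
    |x k - y k| ≤ dist x y := by
  rw [EuclideanSpace.dist_eq]
  have h1 : |x k - y k| = Real.sqrt ((x k - y k) ^ 2) := (Real.sqrt_sq_eq_abs _).symm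
  rw [h1]
  apply Real.sqrt_le_sqrt
  have := Finset.single_le_sum (f := fun i => dist (x i) (y i) ^ 2)
    (fun i _ => sq_nonneg _) (Finset.mem_univ k)
  simpa [Real.dist_eq] using this

lemma good_coord_volume (ψ a : ℝ) (h8 : 8 < ψ) :
    ENNReal.ofReal (ψ - 4) ≤
      volume (Set.Icc 0 ψ ∩ ⋃ i : ℤ, Set.Ioc (a + 4 - ψ - i * ψ) (a - i * ψ)) := by
  have hψ0 : (0:ℝ) < ψ := by linarith
  set G := Set.Icc (0:ℝ) ψ ∩ ⋃ i : ℤ, Set.Ioc (a + 4 - ψ - i * ψ) (a - i * ψ) with hG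
  set n : ℤ := ⌊a / ψ⌋ with hn
  set u : ℝ := a - n * ψ with hu
  have hn1 : (n:ℝ) * ψ ≤ a := by
    have h := Int.floor_le (a / ψ)
    calc (n:ℝ) * ψ ≤ (a / ψ) * ψ := by apply mul_le_mul_of_nonneg_right h hψ0.le
    _ = a := div_mul_cancel₀ a hψ0.ne'
  have hn2 : a < ((n:ℝ) + 1) * ψ := by
    have h := Int.lt_floor_add_one (a / ψ)
    calc a = (a / ψ) * ψ := (div_mul_cancel₀ a hψ0.ne').symm
    _ < ((n:ℝ) + 1) * ψ := by apply mul_lt_mul_of_pos_right (by exact_mod_cast h) hψ0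
  have hu0 : 0 ≤ u := by rw [hu]; linarith
  have huψ : u < ψ := by rw [hu]; nlinarith
  have hbad : Set.Icc (0:ℝ) ψ \ G ⊆
      Set.Ioc u (min (u + 4) ψ) ∪ Set.Icc 0 (u + 4 - ψ) := by
    rintro t ⟨htI, htG⟩
    have htnot : ∀ i : ℤ, ¬ (a + 4 - ψ - i * ψ < t ∧ t ≤ a - i * ψ) := by
      intro i hi
      exact htG ⟨htI, Set.mem_iUnion.2 ⟨i, hi⟩⟩
    set m : ℤ := ⌊(a - t) / ψ⌋ with hm
    have hm1 : (m:ℝ) * ψ ≤ a - t := by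
      have h := Int.floor_le ((a - t) / ψ)
      calc (m:ℝ) * ψ ≤ ((a - t) / ψ) * ψ := mul_le_mul_of_nonneg_right h hψ0.le
      _ = a - t := div_mul_cancel₀ _ hψ0.ne'
    have hm2 : a - t < ((m:ℝ) + 1) * ψ := by
      have h := Int.lt_floor_add_one ((a - t) / ψ)
      calc a - t = ((a - t) / ψ) * ψ := (div_mul_cancel₀ _ hψ0.ne').symm
      _ < ((m:ℝ) + 1) * ψ := mul_lt_mul_of_pos_right (by exact_mod_cast h) hψ0
    have hle : t ≤ a - m * ψ := by linarith
    have h2 : t ≤ a + 4 - ψ - m * ψ := by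
      by_contra h; exact htnot m ⟨lt_of_not_ge h, hle⟩
    have hlo : a - ((m:ℝ) + 1) * ψ < t := by nlinarith
    have hhi : t ≤ a - ((m:ℝ) + 1) * ψ + 4 := by nlinarith
    have ht0 : (0:ℝ) ≤ t := htI.1
    have htψ : t ≤ ψ := htI.2
    have hval : a - ((m:ℝ) + 1) * ψ = u + ((n : ℝ) - (m + 1)) * ψ := by rw [hu]; ring
    have hd : n - (m + 1) = 0 ∨ n - (m + 1) = -1 := by
      have hrange1 : a - ((m:ℝ) + 1) * ψ < ψ := by linarith
      have hrange2 : -4 ≤ a - ((m:ℝ) + 1) * ψ := by linarith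
      have hub : (n : ℝ) - ((m:ℝ) + 1) < 1 := by nlinarith
      have hlb : (-2 : ℝ) < (n : ℝ) - ((m:ℝ) + 1) := by nlinarith
      have hub' : (n : ℤ) - (m + 1) < 1 := by exact_mod_cast hub
      have hlb' : (-2 : ℤ) < n - (m + 1) := by exact_mod_cast hlb
      omega
    rcases hd with hd | hd
    · left
      have hc : ((n : ℝ) - ((m:ℝ) + 1)) = 0 := by
        have : ((n - (m+1) : ℤ) : ℝ) = 0 := by rw [hd]; norm_num
        push_cast at this; linarith
      have heq : a - ((m:ℝ)+1) * ψ = u := by rw [hval, hc]; ring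
      exact ⟨by linarith, le_min (by linarith) htψ⟩
    · right
      have hc : ((n : ℝ) - ((m:ℝ) + 1)) = -1 := by
        have : ((n - (m+1) : ℤ) : ℝ) = -1 := by rw [hd]; norm_num
        push_cast at this; linarith
      have heq : a - ((m:ℝ)+1) * ψ = u - ψ := by rw [hval, hc]; ring
      exact ⟨ht0, by linarith⟩
  have hcover : volume (Set.Ioc u (min (u + 4) ψ) ∪ Set.Icc 0 (u + 4 - ψ)) ≤
      ENNReal.ofReal 4 := by
    refine le_trans (measure_union_le _ _) ?_
    rw [Real.volume_Ioc, Real.volume_Icc]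
    rcases le_or_gt (u + 4) ψ with h | h
    · have hneg : u + 4 - ψ - 0 ≤ 0 := by linarith
      rw [min_eq_left h, ENNReal.ofReal_eq_zero.2 hneg]
      simp [show u + 4 - u = 4 by ring]
    · rw [min_eq_right h.le, ← ENNReal.ofReal_add (by linarith) (by linarith)]
      exact ENNReal.ofReal_le_ofReal (by linarith)
  have hsub : Set.Icc (0:ℝ) ψ ⊆ G ∪ (Set.Ioc u (min (u + 4) ψ) ∪ Set.Icc 0 (u + 4 - ψ)) := by
    intro t ht
    by_cases h : t ∈ G
    · exact Or.inl h
    · exact Or.inr (hbad ⟨ht, h⟩)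
  have hψvol : ENNReal.ofReal ψ ≤ volume G + ENNReal.ofReal 4 := by
    calc ENNReal.ofReal ψ = volume (Set.Icc (0:ℝ) ψ) := by rw [Real.volume_Icc]; norm_num
    _ ≤ volume G + volume (Set.Ioc u (min (u + 4) ψ) ∪ Set.Icc 0 (u + 4 - ψ)) :=
        le_trans (measure_mono hsub) (measure_union_le _ _)
    _ ≤ volume G + ENNReal.ofReal 4 := by gcongr
  have : ENNReal.ofReal (ψ - 4) + ENNReal.ofReal 4 = ENNReal.ofReal ψ := by
    rw [← ENNReal.ofReal_add (by linarith) (by norm_num)]; norm_num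
  have h4 : ENNReal.ofReal (ψ - 4) + ENNReal.ofReal 4 ≤ volume G + ENNReal.ofReal 4 := by
    rw [this]; exact hψvol
  exact ENNReal.add_le_add_iff_right ENNReal.ofReal_ne_top |>.mp h4


/-- The Euclidean plane `ℝ²`. -/
abbrev Plane := EuclideanSpace ℝ (Fin 2)

/-- The `(i,j)`-th cell of the grid of side length `ψ` shifted by `p`:
the half-open square `p + (iψ, jψ) + [0,ψ)²`. -/
def gridCell (p : Plane) (ψ : ℝ) (i j : ℤ) : Set Plane :=
  {x | (p 0 + i * ψ ≤ x 0 ∧ x 0 < p 0 + i * ψ + ψ) ∧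
       (p 1 + j * ψ ≤ x 1 ∧ x 1 < p 1 + j * ψ + ψ)}

/-- For a grid of side `ψ ≥ 1` shifted by a uniformly random point of `[0,ψ]²`,
two intersecting unit disks `d₁, d₂` both land in the interior of a single cell
with probability at least `1 - 8/ψ`; equivalently, the set of good shifts has
measure at least `(1 - 8/ψ)·ψ²`. -/
theorem random_shift_captures_intersecting_disks (ψ : ℝ) (hψ : 1 ≤ ψ)
    (c₁ c₂ : Plane)
    (hint : (Metric.closedBall c₁ 1 ∩ Metric.closedBall c₂ 1).Nonempty) :
    ENNReal.ofReal ((1 - 8 / ψ) * ψ ^ 2) ≤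
      volume {p : Plane | p 0 ∈ Set.Icc (0 : ℝ) ψ ∧ p 1 ∈ Set.Icc (0 : ℝ) ψ ∧
        ∃ i j : ℤ,
          Metric.closedBall c₁ 1 ∪ Metric.closedBall c₂ 1 ⊆ gridCell p ψ i j} := by
  have hψ0 : (0:ℝ) < ψ := by linarith
  rcases le_or_gt ψ 8 with h8 | h8
  · have hle : (1 - 8 / ψ) * ψ ^ 2 ≤ 0 := by
      have h1 : 1 - 8 / ψ ≤ 0 := by
        rw [sub_nonpos, le_div_iff₀ hψ0]; linarith
      nlinarith [sq_nonneg ψ]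
    rw [ENNReal.ofReal_eq_zero.2 hle]
    exact zero_le
  -- main case
  -- distance between centers
  obtain ⟨z, hz1, hz2⟩ := hint
  have hcc : dist c₁ c₂ ≤ 2 := by
    have h1 : dist c₁ z ≤ 1 := by rw [dist_comm]; exact Metric.mem_closedBall.1 hz1
    have h2 : dist z c₂ ≤ 1 := Metric.mem_closedBall.1 hz2
    have h3 := dist_triangle c₁ z c₂
    linarith
  set a : Fin 2 → ℝ := fun k => min (c₁ k) (c₂ k) - 1 with ha
  have hbound : ∀ x ∈ Metric.closedBall c₁ 1 ∪ Metric.closedBall c₂ 1,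
      ∀ k, a k ≤ x k ∧ x k ≤ a k + 4 := by
    intro x hx k
    have hck : |c₁ k - c₂ k| ≤ 2 := le_trans (coord_dist_le c₁ c₂ k) hcc
    have hck1 := abs_le.1 hck
    rcases hx with hx | hx
    · have h1 : |x k - c₁ k| ≤ 1 :=
        le_trans (coord_dist_le x c₁ k) (Metric.mem_closedBall.1 hx)
      have h1' := abs_le.1 h1
      rcases min_cases (c₁ k) (c₂ k) with ⟨hm, _⟩ | ⟨hm, _⟩ <;>
        constructor <;> simp only [ha, hm] <;> linarith
    · have h1 : |x k - c₂ k| ≤ 1 :=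
        le_trans (coord_dist_le x c₂ k) (Metric.mem_closedBall.1 hx)
      have h1' := abs_le.1 h1
      rcases min_cases (c₁ k) (c₂ k) with ⟨hm, _⟩ | ⟨hm, _⟩ <;>
        constructor <;> simp only [ha, hm] <;> linarith
  set G : Fin 2 → Set ℝ := fun k =>
    Set.Icc 0 ψ ∩ ⋃ i : ℤ, Set.Ioc (a k + 4 - ψ - i * ψ) (a k - i * ψ) with hGdef
  have hGmeas : ∀ k, MeasurableSet (G k) := fun k =>
    measurableSet_Icc.inter (MeasurableSet.iUnion fun i => measurableSet_Ioc)
  -- inclusion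
  have hincl : {p : Plane | ∀ k, p k ∈ G k} ⊆
      {p : Plane | p 0 ∈ Set.Icc (0 : ℝ) ψ ∧ p 1 ∈ Set.Icc (0 : ℝ) ψ ∧
        ∃ i j : ℤ,
          Metric.closedBall c₁ 1 ∪ Metric.closedBall c₂ 1 ⊆ gridCell p ψ i j} := by
    intro p hp
    obtain ⟨hp0I, hp0U⟩ := hp 0
    obtain ⟨hp1I, hp1U⟩ := hp 1
    refine ⟨hp0I, hp1I, ?_⟩
    obtain ⟨i, hi⟩ := Set.mem_iUnion.1 hp0U
    obtain ⟨j, hj⟩ := Set.mem_iUnion.1 hp1U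
    refine ⟨i, j, ?_⟩
    intro x hx
    obtain ⟨hx0l, hx0r⟩ := hbound x hx 0
    obtain ⟨hx1l, hx1r⟩ := hbound x hx 1
    obtain ⟨hi1, hi2⟩ := hi
    obtain ⟨hj1, hj2⟩ := hj
    exact ⟨⟨by linarith, by linarith⟩, ⟨by linarith, by linarith⟩⟩
  refine le_trans ?_ (measure_mono hincl)
  -- compute the volume of the product set
  have hpre : (MeasurableEquiv.toLp 2 (Fin 2 → ℝ)).symm ⁻¹' (Set.univ.pi G) =
      {p : Plane | ∀ k, p k ∈ G k} := by
    ext p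
    simp [Set.mem_pi]
  have hvol : volume {p : Plane | ∀ k, p k ∈ G k} = ∏ k, volume (G k) := by
    rw [← hpre,
      (EuclideanSpace.volume_preserving_symm_measurableEquiv_toLp (Fin 2)).measure_preimage
        ((MeasurableSet.univ_pi hGmeas).nullMeasurableSet),
      volume_pi_pi]
  rw [hvol, Fin.prod_univ_two]
  have h0 := good_coord_volume ψ (a 0) h8
  have h1 := good_coord_volume ψ (a 1) h8
  calc ENNReal.ofReal ((1 - 8 / ψ) * ψ ^ 2)
      ≤ ENNReal.ofReal ((ψ - 4) * (ψ - 4)) := by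
        apply ENNReal.ofReal_le_ofReal
        have : (1 - 8 / ψ) * ψ ^ 2 = ψ ^ 2 - 8 * ψ := by field_simp
        rw [this]; nlinarith
    _ = ENNReal.ofReal (ψ - 4) * ENNReal.ofReal (ψ - 4) :=
        ENNReal.ofReal_mul (by linarith)
    _ ≤ volume (G 0) * volume (G 1) := mul_le_mul' h0 h1
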